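/- arXiv:1909.10221 — 2 statements merged into one kernel-verified Lean document; each statement's English description precedes it below -/
import Mathlib

section
/- Let Ω ⊂ ℝ^d be open and bounded, p ∈ (1,∞), and J : ℝ^d → [0,∞) a mollifier supported in the closed unit ball with ∫ J = 1. Let J_ε(x) = ε^{−d} J(x/ε). Suppose f_n ∈ L^p(Ω) and ρ_n ≥ c > 0 on Ω with F_ε(f_n) := ε_n^{−p} ∫_Ω ∫_Ω η_{ε_n}(|x−z|) |f_n(x) − f_n(z)|^p ρ_n(x) ρ_n(z) dx dz uniformly bounded, where J ≤ C η and ε_n → 0. Then for any Ω' compactly contained in Ω, ‖f_n − J_{ε_n} ∗ f_n‖_{L^p(Ω')}^p ≤ (C ε_n^p / c^2) F_{ε_n}(f_n), and in particular ‖f_n − J_{ε_n} ∗ f_n‖_{L^p(Ω')} → 0. -/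
/-!
`J_ε` is a probability density on `B(0, ε)`, so Jensen's inequality gives
`|f(x) − J_ε ∗ f(x)|^p ≤ ∫ J_ε(z) |f(x) − f(x − z)|^p dz`. The domination `J ≤ C η` bounds this
by `C ∫_{B(x,ε)} η_ε(|x − w|) |f(x) − f(w)|^p dw`; when `B(x, ε) ⊆ Ω`, enlarging the domain to `Ω`
and inserting the weights `ρ(x) ρ(w) ≥ c²` costs a factor `c⁻²`. Integrating over `x ∈ Ω'`
yields `(C / c²) ε^p F_ε(f)`; with `F_{ε_n}(f_n) ≤ B` and `ε_n → 0` the error tends to `0`.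
-/

open MeasureTheory Set Metric ENNReal NNReal Filter Topology

section

variable {α : Type*} [MeasurableSpace α]

theorem isProbabilityMeasure_withDensity_ofReal {μ : Measure α} {K : α → ℝ}
    (hK0 : ∀ x, 0 ≤ K x) (hK1 : ∫ x, K x ∂μ = 1) :
    IsProbabilityMeasure (μ.withDensity fun x => ENNReal.ofReal (K x)) := by
  have hKint : Integrable K μ := Integrable.of_integral_ne_zero (by simp [hK1])
  constructor
  rw [withDensity_apply _ MeasurableSet.univ, Measure.restrict_univ,
    ← ofReal_integral_eq_lintegral_ofReal hKint (ae_of_all _ hK0), hK1, ENNReal.ofReal_one]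

theorem eLpNorm_ofReal_rpow_eq_lintegral {μ : Measure α} {g : α → ℝ} {p : ℝ} (hp : 0 < p) :
    eLpNorm g (ENNReal.ofReal p) μ ^ p = ∫⁻ z, ENNReal.ofReal (|g z| ^ p) ∂μ := by
  rw [eLpNorm_eq_lintegral_rpow_enorm_toReal (by simp [hp]) (by simp),
    ENNReal.toReal_ofReal hp.le, ← ENNReal.rpow_mul, one_div, inv_mul_cancel₀ hp.ne',
    ENNReal.rpow_one]
  simp_rw [Real.enorm_eq_ofReal_abs, ENNReal.ofReal_rpow_of_nonneg (abs_nonneg _) hp.le]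

theorem ofReal_abs_integral_rpow_le_lintegral {ν : Measure α} [IsProbabilityMeasure ν]
    {g : α → ℝ} (hg : AEStronglyMeasurable g ν) {p : ℝ} (hp : 1 ≤ p) :
    ENNReal.ofReal (|∫ z, g z ∂ν| ^ p) ≤ ∫⁻ z, ENNReal.ofReal (|g z| ^ p) ∂ν := by
  have hp0 : 0 < p := zero_lt_one.trans_le hp
  calc ENNReal.ofReal (|∫ z, g z ∂ν| ^ p) = ‖∫ z, g z ∂ν‖ₑ ^ p := by
        rw [Real.enorm_eq_ofReal_abs, ENNReal.ofReal_rpow_of_nonneg (abs_nonneg _) hp0.le]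
    _ ≤ (∫⁻ z, ‖g z‖ₑ ∂ν) ^ p := by gcongr; exact enorm_integral_le_lintegral_enorm g
    _ = eLpNorm g 1 ν ^ p := by rw [eLpNorm_one_eq_lintegral_enorm]
    _ ≤ eLpNorm g (ENNReal.ofReal p) ν ^ p := by
        gcongr; exact eLpNorm_le_eLpNorm_of_exponent_le (ENNReal.one_le_ofReal.mpr hp) hg
    _ = ∫⁻ z, ENNReal.ofReal (|g z| ^ p) ∂ν := eLpNorm_ofReal_rpow_eq_lintegral hp0

/- If `h` is not `ν`-integrable the integral is the junk value `0`, but then `a - h` is not in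
`L^p(ν)` either, so the right-hand side is infinite. -/
theorem ofReal_abs_sub_integral_rpow_le_lintegral {ν : Measure α} [IsProbabilityMeasure ν]
    {h : α → ℝ} (hh : AEStronglyMeasurable h ν) {p : ℝ} (hp : 1 ≤ p) (a : ℝ) :
    ENNReal.ofReal (|a - ∫ z, h z ∂ν| ^ p) ≤ ∫⁻ z, ENNReal.ofReal (|a - h z| ^ p) ∂ν := by
  by_cases hint : Integrable h ν
  · have hsub : a - ∫ z, h z ∂ν = ∫ z, (a - h z) ∂ν := by
      rw [integral_sub (integrable_const a) hint, integral_const, probReal_univ, one_smul]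
    rw [hsub]
    exact ofReal_abs_integral_rpow_le_lintegral (aestronglyMeasurable_const.sub hh) hp
  · refine le_top.trans_eq (Eq.symm ?_)
    by_contra hfin
    have hmem : MemLp (fun z => a - h z) (ENNReal.ofReal p) ν := by
      refine ⟨aestronglyMeasurable_const.sub hh, ?_⟩
      rw [← ENNReal.rpow_lt_top_iff_of_pos (zero_lt_one.trans_le hp),
        eLpNorm_ofReal_rpow_eq_lintegral (zero_lt_one.trans_le hp)]
      exact lt_top_iff_ne_top.mpr hfin
    exact hint (((integrable_const a).sub (hmem.integrable (ENNReal.one_le_ofReal.mpr hp))).congr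
      (ae_of_all _ fun z => sub_sub_cancel a (h z)))

theorem ofReal_abs_sub_integral_mul_rpow_le {μ : Measure α} {K h : α → ℝ} (hKm : Measurable K)
    (hK0 : ∀ z, 0 ≤ K z) (hK1 : ∫ z, K z ∂μ = 1) (hh : Measurable h) {p : ℝ} (hp : 1 ≤ p)
    (a : ℝ) :
    ENNReal.ofReal (|a - ∫ z, K z * h z ∂μ| ^ p) ≤
      ∫⁻ z, ENNReal.ofReal (K z) * ENNReal.ofReal (|a - h z| ^ p) ∂μ := by
  set ν := μ.withDensity fun z => ENNReal.ofReal (K z)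
  have : IsProbabilityMeasure ν := isProbabilityMeasure_withDensity_ofReal hK0 hK1
  have hint : ∫ z, K z * h z ∂μ = ∫ z, h z ∂ν := by
    calc ∫ z, K z * h z ∂μ = ∫ z, (K z).toNNReal • h z ∂μ := by
          simp_rw [NNReal.smul_def, smul_eq_mul, Real.coe_toNNReal _ (hK0 _)]
      _ = ∫ z, h z ∂ν := (integral_withDensity_eq_integral_smul hKm.real_toNNReal h).symm
  have hlint : ∫⁻ z, ENNReal.ofReal (K z) * ENNReal.ofReal (|a - h z| ^ p) ∂μ =
      ∫⁻ z, ENNReal.ofReal (|a - h z| ^ p) ∂ν :=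
    (lintegral_withDensity_eq_lintegral_mul_non_measurable μ hKm.ennreal_ofReal
      (ae_of_all _ fun _ => ENNReal.ofReal_lt_top) _).symm
  rw [hint, hlint]
  exact ofReal_abs_sub_integral_rpow_le_lintegral hh.aestronglyMeasurable hp a

theorem setLIntegral_ofReal_le_inv_sq_mul {μ : Measure α} {s : Set α} {g ρ : α → ℝ} {a c : ℝ}
    (hc : 0 < c) (hg : ∀ w, 0 ≤ g w) (ha : c ≤ a) (hρ : ∀ w ∈ s, c ≤ ρ w)
    (hm : Measurable fun w => ENNReal.ofReal (g w * a * ρ w)) :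
    ∫⁻ w in s, ENNReal.ofReal (g w) ∂μ ≤
      ENNReal.ofReal ((c ^ 2)⁻¹) * ∫⁻ w in s, ENNReal.ofReal (g w * a * ρ w) ∂μ := by
  rw [← lintegral_const_mul' _ _ ENNReal.ofReal_ne_top]
  refine setLIntegral_mono (hm.const_mul _) fun w hw => ?_
  rw [← ENNReal.ofReal_mul (by positivity)]
  refine ENNReal.ofReal_le_ofReal ((le_inv_mul_iff₀ (by positivity)).mpr ?_)
  have hcc : c ^ 2 ≤ a * ρ w := by nlinarith [hρ w hw]
  nlinarith [mul_le_mul_of_nonneg_left hcc (hg w)]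

end

theorem setLIntegral_ball_zero_comp_sub {G : Type*} [NormedAddCommGroup G] [MeasurableSpace G]
    [BorelSpace G] (μ : Measure G) [μ.IsAddLeftInvariant] [μ.IsNegInvariant]
    (g : G → ℝ≥0∞) (x : G) (r : ℝ) :
    ∫⁻ z in ball 0 r, g (x - z) ∂μ = ∫⁻ w in ball x r, g w ∂μ := by
  have hpre : (fun z => x - z) ⁻¹' ball x r = ball 0 r := by
    ext z; simp [dist_eq_norm]
  rw [← hpre]
  exact (Measure.measurePreserving_sub_left μ x).setLIntegral_comp_preimage_emb
    (MeasurableEquiv.subLeft x).measurableEmbedding g _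

theorem norm_inv_smul_of_pos {V : Type*} [NormedAddCommGroup V] [NormedSpace ℝ V] {ε : ℝ}
    (hε : 0 < ε) (z : V) : ‖ε⁻¹ • z‖ = ‖z‖ / ε := by
  rw [norm_smul, norm_inv, Real.norm_of_nonneg hε.le, inv_mul_eq_div]

noncomputable section Kernel

variable {d : ℕ}

local notation "E" => EuclideanSpace ℝ (Fin d)

/- `scaledKernel J ε` is the paper's `J_ε`, `mollify J ε f` is `J_ε ∗ f` and
`nonlocalEnergy Ω η ρ f p ε` is `F_ε(f)` with weight `ρ`. -/
def scaledKernel (J : E → ℝ) (ε : ℝ) (z : E) : ℝ := ε ^ (-(d : ℝ)) * J (ε⁻¹ • z)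

def mollify (J : E → ℝ) (ε : ℝ) (f : E → ℝ) (x : E) : ℝ :=
  ∫ z in ball 0 ε, scaledKernel J ε z * f (x - z)

def nonlocalEnergy (Ω : Set E) (η : ℝ → ℝ) (ρ f : E → ℝ) (p ε : ℝ) : ℝ≥0∞ :=
  (ENNReal.ofReal (ε ^ p))⁻¹ * ∫⁻ x in Ω, ∫⁻ z in Ω, ENNReal.ofReal
    (ε ^ (-(d : ℝ)) * η (‖x - z‖ / ε) * |f x - f z| ^ p * ρ x * ρ z)

variable {J : EuclideanSpace ℝ (Fin d) → ℝ} {ε : ℝ}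

theorem scaledKernel_nonneg (hJ0 : ∀ z, 0 ≤ J z) (hε : 0 ≤ ε) (z : E) :
    0 ≤ scaledKernel J ε z :=
  mul_nonneg (Real.rpow_nonneg hε _) (hJ0 _)

theorem measurable_scaledKernel (hJm : Measurable J) (ε : ℝ) : Measurable (scaledKernel J ε) :=
  measurable_const.mul (hJm.comp (measurable_const_smul _))

theorem scaledKernel_eq_zero_of_notMem_closedBall (hJsupp : Function.support J ⊆ closedBall 0 1)
    (hε : 0 < ε) {z : E} (hz : z ∉ closedBall 0 ε) : scaledKernel J ε z = 0 := by
  have hJz : J (ε⁻¹ • z) = 0 := by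
    refine Function.notMem_support.mp fun hmem => hz ?_
    have := mem_closedBall_zero_iff.mp (hJsupp hmem)
    rw [norm_inv_smul_of_pos hε, div_le_one hε] at this
    exact mem_closedBall_zero_iff.mpr this
  rw [scaledKernel, hJz, mul_zero]

/- The sphere of radius `ε` is null, so the open ball carries the whole mass of `J_ε`. -/
theorem setIntegral_ball_scaledKernel (hJsupp : Function.support J ⊆ closedBall 0 1)
    (hε : 0 < ε) : ∫ z in ball (0 : E) ε, scaledKernel J ε z = ∫ z, J z := by
  have hball : (ball (0 : E) ε : Set E) =ᵐ[volume] closedBall (0 : E) ε := by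
    refine ae_eq_set.mpr ⟨?_, ?_⟩
    · rw [sdiff_eq_empty.mpr ball_subset_closedBall, measure_empty]
    · rw [closedBall_sdiff_ball]
      exact Measure.addHaar_sphere_of_ne_zero volume 0 hε.ne'
  rw [setIntegral_congr_set hball, setIntegral_eq_integral_of_forall_compl_eq_zero
      fun z hz => scaledKernel_eq_zero_of_notMem_closedBall hJsupp hε hz]
  simp only [scaledKernel]
  rw [integral_const_mul, Measure.integral_comp_smul, finrank_euclideanSpace_fin, inv_pow,
    inv_inv, abs_of_pos (pow_pos hε d), smul_eq_mul, ← mul_assoc, Real.rpow_neg hε.le,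
    Real.rpow_natCast, inv_mul_cancel₀ (pow_pos hε d).ne', one_mul]

theorem scaledKernel_le {η : ℝ → ℝ} {C : ℝ} (hJη : ∀ z, J z ≤ C * η ‖z‖) (hε : 0 < ε) (z : E) :
    scaledKernel J ε z ≤ C * (ε ^ (-(d : ℝ)) * η (‖z‖ / ε)) := by
  have h := mul_le_mul_of_nonneg_left (hJη (ε⁻¹ • z)) (Real.rpow_nonneg hε.le (-(d : ℝ)))
  rw [norm_inv_smul_of_pos hε] at h
  rw [scaledKernel]
  linarith

theorem ofReal_abs_sub_mollify_rpow_le (hJm : Measurable J) (hJ0 : ∀ z, 0 ≤ J z)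
    (hJsupp : Function.support J ⊆ closedBall 0 1) (hJ1 : ∫ z, J z = 1) (hε : 0 < ε)
    {f : E → ℝ} (hf : Measurable f) {p : ℝ} (hp : 1 ≤ p) (x : E) :
    ENNReal.ofReal (|f x - mollify J ε f x| ^ p) ≤
      ∫⁻ z in ball 0 ε, ENNReal.ofReal (scaledKernel J ε z) *
        ENNReal.ofReal (|f x - f (x - z)| ^ p) :=
  ofReal_abs_sub_integral_mul_rpow_le (measurable_scaledKernel hJm ε)
    (scaledKernel_nonneg hJ0 hε.le) (by rw [setIntegral_ball_scaledKernel hJsupp hε, hJ1])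
    (hf.comp (measurable_const.sub measurable_id)) hp (f x)

theorem lintegral_scaledKernel_mul_le {η : ℝ → ℝ} {C : ℝ} (hJη : ∀ z, J z ≤ C * η ‖z‖)
    (hC : 0 ≤ C) (hε : 0 < ε) (f : E → ℝ) (p : ℝ) (x : E) :
    ∫⁻ z in ball 0 ε, ENNReal.ofReal (scaledKernel J ε z) *
        ENNReal.ofReal (|f x - f (x - z)| ^ p) ≤
      ENNReal.ofReal C * ∫⁻ w in ball x ε,
        ENNReal.ofReal (ε ^ (-(d : ℝ)) * η (‖x - w‖ / ε) * |f x - f w| ^ p) := by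
  set g : E → ℝ≥0∞ := fun w =>
    ENNReal.ofReal (ε ^ (-(d : ℝ)) * η (‖x - w‖ / ε) * |f x - f w| ^ p)
  calc ∫⁻ z in ball 0 ε, ENNReal.ofReal (scaledKernel J ε z) *
        ENNReal.ofReal (|f x - f (x - z)| ^ p)
      ≤ ∫⁻ z in ball 0 ε, ENNReal.ofReal C * g (x - z) := by
        refine lintegral_mono fun z => ?_
        have hA : 0 ≤ |f x - f (x - z)| ^ p := Real.rpow_nonneg (abs_nonneg _) p
        simp only [g, sub_sub_cancel x z]
        rw [← ENNReal.ofReal_mul' hA, ← ENNReal.ofReal_mul hC]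
        refine ENNReal.ofReal_le_ofReal ?_
        calc scaledKernel J ε z * |f x - f (x - z)| ^ p
            ≤ C * (ε ^ (-(d : ℝ)) * η (‖z‖ / ε)) * |f x - f (x - z)| ^ p :=
              mul_le_mul_of_nonneg_right (scaledKernel_le hJη hε z) hA
          _ = _ := by ring
    _ = ENNReal.ofReal C * ∫⁻ w in ball x ε, g w := by
        rw [lintegral_const_mul' _ _ ENNReal.ofReal_ne_top,
          setLIntegral_ball_zero_comp_sub volume g x ε]

theorem ofReal_abs_sub_mollify_rpow_le_lintegral {η : ℝ → ℝ} {ρ f : E → ℝ} {C c p : ℝ}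
    {Ω : Set E} (hJm : Measurable J) (hJ0 : ∀ z, 0 ≤ J z)
    (hJsupp : Function.support J ⊆ closedBall 0 1) (hJ1 : ∫ z, J z = 1)
    (hJη : ∀ z, J z ≤ C * η ‖z‖) (hC : 0 ≤ C) (hηm : Measurable η) (hη0 : ∀ t, 0 ≤ η t)
    (hρm : Measurable ρ) (hc : 0 < c) (hρ : ∀ w ∈ Ω, c ≤ ρ w) (hf : Measurable f)
    (hp : 1 ≤ p) (hε : 0 < ε) {x : E} (hball : closedBall x ε ⊆ Ω) :
    ENNReal.ofReal (|f x - mollify J ε f x| ^ p) ≤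
      ENNReal.ofReal C * (ENNReal.ofReal ((c ^ 2)⁻¹) * ∫⁻ w in Ω, ENNReal.ofReal
        (ε ^ (-(d : ℝ)) * η (‖x - w‖ / ε) * |f x - f w| ^ p * ρ x * ρ w)) := by
  calc ENNReal.ofReal (|f x - mollify J ε f x| ^ p)
      ≤ ∫⁻ z in ball 0 ε, ENNReal.ofReal (scaledKernel J ε z) *
          ENNReal.ofReal (|f x - f (x - z)| ^ p) :=
        ofReal_abs_sub_mollify_rpow_le hJm hJ0 hJsupp hJ1 hε hf hp x
    _ ≤ ENNReal.ofReal C * ∫⁻ w in ball x ε,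
          ENNReal.ofReal (ε ^ (-(d : ℝ)) * η (‖x - w‖ / ε) * |f x - f w| ^ p) :=
        lintegral_scaledKernel_mul_le hJη hC hε f p x
    _ ≤ ENNReal.ofReal C * ∫⁻ w in Ω,
          ENNReal.ofReal (ε ^ (-(d : ℝ)) * η (‖x - w‖ / ε) * |f x - f w| ^ p) := by
        gcongr
        exact ball_subset_closedBall.trans hball
    _ ≤ _ := by
        gcongr
        refine setLIntegral_ofReal_le_inv_sq_mul hc (fun w => ?_)
          (hρ x (hball (mem_closedBall_self hε.le))) hρ (by fun_prop)
        have := hη0 (‖x - w‖ / ε)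
        positivity

theorem lintegral_abs_sub_mollify_rpow_le {η : ℝ → ℝ} {ρ f : E → ℝ} {C c p : ℝ}
    {Ω Ω' : Set E} (hJm : Measurable J) (hJ0 : ∀ z, 0 ≤ J z)
    (hJsupp : Function.support J ⊆ closedBall 0 1) (hJ1 : ∫ z, J z = 1)
    (hJη : ∀ z, J z ≤ C * η ‖z‖) (hC : 0 ≤ C) (hηm : Measurable η) (hη0 : ∀ t, 0 ≤ η t)
    (hρm : Measurable ρ) (hc : 0 < c) (hρ : ∀ w ∈ Ω, c ≤ ρ w) (hf : Measurable f)
    (hp : 1 ≤ p) (hε : 0 < ε) (hball : ∀ x ∈ Ω', closedBall x ε ⊆ Ω) :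
    ∫⁻ x in Ω', ENNReal.ofReal (|f x - mollify J ε f x| ^ p) ≤
      ENNReal.ofReal (C * ε ^ p / c ^ 2) * nonlocalEnergy Ω η ρ f p ε := by
  set P : E → E → ℝ≥0∞ := fun x w =>
    ENNReal.ofReal (ε ^ (-(d : ℝ)) * η (‖x - w‖ / ε) * |f x - f w| ^ p * ρ x * ρ w)
  have hPm : Measurable (Function.uncurry P) := by fun_prop
  have hεp : ENNReal.ofReal (ε ^ p) ≠ 0 := by
    simpa using Real.rpow_pos_of_pos hε p
  have hconst : ENNReal.ofReal (C * ε ^ p / c ^ 2) =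
      ENNReal.ofReal C * ENNReal.ofReal ((c ^ 2)⁻¹) * ENNReal.ofReal (ε ^ p) := by
    rw [← ENNReal.ofReal_mul hC, ← ENNReal.ofReal_mul (by positivity), div_eq_mul_inv,
      mul_right_comm]
  calc ∫⁻ x in Ω', ENNReal.ofReal (|f x - mollify J ε f x| ^ p)
      ≤ ∫⁻ x in Ω', ENNReal.ofReal C * ENNReal.ofReal ((c ^ 2)⁻¹) * ∫⁻ w in Ω, P x w :=
        setLIntegral_mono (hPm.lintegral_prod_right'.const_mul _) fun x hx =>
          (ofReal_abs_sub_mollify_rpow_le_lintegral hJm hJ0 hJsupp hJ1 hJη hC hηm hη0 hρm hc hρ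
            hf hp hε (hball x hx)).trans_eq (mul_assoc _ _ _).symm
    _ ≤ ENNReal.ofReal C * ENNReal.ofReal ((c ^ 2)⁻¹) * ∫⁻ x in Ω, ∫⁻ w in Ω, P x w := by
        rw [lintegral_const_mul' _ _ (by finiteness)]
        gcongr
        exact fun x hx => hball x hx (mem_closedBall_self hε.le)
    _ = ENNReal.ofReal (C * ε ^ p / c ^ 2) * nonlocalEnergy Ω η ρ f p ε := by
        rw [hconst, nonlocalEnergy, mul_assoc _ (ENNReal.ofReal (ε ^ p)), ← mul_assoc
          (ENNReal.ofReal (ε ^ p)), ENNReal.mul_inv_cancel hεp ENNReal.ofReal_ne_top, one_mul]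

end Kernel

theorem stmt7_general (d : ℕ) (p : ℝ) (hp : 1 < p)
    (Ω Ω' : Set (EuclideanSpace ℝ (Fin d)))
    (r : ℝ) (hr : 0 < r) (hΩ'r : ∀ x ∈ Ω', closedBall x r ⊆ Ω)
    (η : ℝ → ℝ) (hηm : Measurable η) (hη0 : ∀ s, 0 ≤ η s)
    (J : EuclideanSpace ℝ (Fin d) → ℝ) (hJm : Measurable J) (hJ0 : ∀ z, 0 ≤ J z)
    (hJsupp : Function.support J ⊆ closedBall 0 1) (hJ1 : (∫ z, J z) = 1)
    (C : ℝ) (hC : 0 < C) (hJη : ∀ z : EuclideanSpace ℝ (Fin d), J z ≤ C * η ‖z‖)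
    (c : ℝ) (hc : 0 < c)
    (ρn : ℕ → EuclideanSpace ℝ (Fin d) → ℝ) (hρnm : ∀ n, Measurable (ρn n))
    (hρlb : ∀ n, ∀ x ∈ Ω, c ≤ ρn n x)
    (fn : ℕ → EuclideanSpace ℝ (Fin d) → ℝ) (hfnm : ∀ n, Measurable (fn n))
    (ε : ℕ → ℝ) (hε : ∀ n, 0 < ε n) (hε0 : Tendsto ε atTop (𝓝 0))
    (F : ℕ → ℝ≥0∞)
    (hF : ∀ n, F n = (ENNReal.ofReal (ε n ^ p))⁻¹ *
      ∫⁻ x in Ω, ∫⁻ z in Ω, ENNReal.ofReal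
        ((ε n) ^ (-(d : ℝ)) * η (‖x - z‖ / ε n) * |fn n x - fn n z| ^ p *
          ρn n x * ρn n z))
    (B : ℝ≥0) (hFbd : ∀ n, F n ≤ B) :
    (∀ n, (∀ x ∈ Ω', closedBall x (ε n) ⊆ Ω) →
      (∫⁻ x in Ω', ENNReal.ofReal
          (|fn n x - ∫ z in ball (0 : EuclideanSpace ℝ (Fin d)) (ε n),
              (ε n) ^ (-(d : ℝ)) * J ((ε n)⁻¹ • z) * fn n (x - z)| ^ p)) ≤
        ENNReal.ofReal (C * ε n ^ p / c ^ 2) * F n) ∧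
    Tendsto (fun n => ∫⁻ x in Ω', ENNReal.ofReal
        (|fn n x - ∫ z in ball (0 : EuclideanSpace ℝ (Fin d)) (ε n),
            (ε n) ^ (-(d : ℝ)) * J ((ε n)⁻¹ • z) * fn n (x - z)| ^ p))
      atTop (𝓝 0) := by
  have hestimate : ∀ n, (∀ x ∈ Ω', closedBall x (ε n) ⊆ Ω) →
      ∫⁻ x in Ω', ENNReal.ofReal (|fn n x - mollify J (ε n) (fn n) x| ^ p) ≤
        ENNReal.ofReal (C * ε n ^ p / c ^ 2) * F n := fun n hball => by
    rw [hF n]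
    exact lintegral_abs_sub_mollify_rpow_le hJm hJ0 hJsupp hJ1 hJη hC.le hηm hη0 (hρnm n) hc
      (hρlb n) (hfnm n) hp.le (hε n) hball
  refine ⟨hestimate, ?_⟩
  have hbound : ∀ᶠ n in atTop,
      ∫⁻ x in Ω', ENNReal.ofReal (|fn n x - mollify J (ε n) (fn n) x| ^ p) ≤
        ENNReal.ofReal (C * ε n ^ p / c ^ 2) * B := by
    filter_upwards [hε0.eventually_lt_const hr] with n hn
    refine (hestimate n fun x hx => (closedBall_subset_closedBall hn.le).trans (hΩ'r x hx)).trans ?_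
    gcongr
    exact hFbd n
  have hp0 : 0 < p := zero_lt_one.trans hp
  have hconst : Tendsto (fun n => C * ε n ^ p / c ^ 2) atTop (𝓝 0) := by
    simpa [Real.zero_rpow hp0.ne'] using
      ((hε0.rpow_const (Or.inr hp0.le)).const_mul C).div_const (c ^ 2)
  have hlim : Tendsto (fun n => ENNReal.ofReal (C * ε n ^ p / c ^ 2) * B) atTop (𝓝 0) := by
    simpa using
      ENNReal.Tendsto.mul_const (ENNReal.tendsto_ofReal hconst) (Or.inr ENNReal.coe_ne_top)
  exact tendsto_of_tendsto_of_tendsto_of_le_of_le' tendsto_const_nhds hlim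
    (Eventually.of_forall fun _ => zero_le) hbound

/-- mollification estimate from the nonlocal p-Dirichlet energy. If `J` is a
mollifier supported in the closed unit ball with `∫ J = 1` and `J ≤ C η(|·|)`, the weights
`ρ_n ≥ c > 0` on `Ω`, and the nonlocal energies
`F_{ε_n}(f_n) = ε_n^{−p} ∬ η_{ε_n}(|x−z|)|f_n(x)−f_n(z)|^p ρ_n(x)ρ_n(z)` are uniformly
bounded with `ε_n → 0`, then for any `Ω'` compactly contained in `Ω` (with `closedBall x ε_n
⊆ Ω` for `x ∈ Ω'`), `‖f_n − J_{ε_n} ∗ f_n‖_{L^p(Ω')}^p ≤ (C ε_n^p / c²) F_{ε_n}(f_n)`, and in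
particular `‖f_n − J_{ε_n} ∗ f_n‖_{L^p(Ω')} → 0`. -/
theorem stmt7 (d : ℕ) (hd : 0 < d) (p : ℝ) (hp : 1 < p)
    (Ω Ω' : Set (EuclideanSpace ℝ (Fin d))) (hΩo : IsOpen Ω) (hΩb : Bornology.IsBounded Ω)
    (hΩ'sub : Ω' ⊆ Ω) (hΩ'cpt : IsCompact (closure Ω')) (hΩ'cl : closure Ω' ⊆ Ω)
    (r : ℝ) (hr : 0 < r) (hΩ'r : ∀ x ∈ Ω', closedBall x r ⊆ Ω)
    (η : ℝ → ℝ) (hηm : Measurable η) (hη0 : ∀ s, 0 ≤ η s)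
    (hηdec : ∀ a b : ℝ, 0 ≤ a → a ≤ b → η b ≤ η a) (hηpos : 0 < η 0)
    (J : EuclideanSpace ℝ (Fin d) → ℝ) (hJm : Measurable J) (hJ0 : ∀ z, 0 ≤ J z)
    (hJsupp : Function.support J ⊆ closedBall 0 1) (hJint : Integrable J)
    (hJ1 : (∫ z, J z) = 1)
    (C : ℝ) (hC : 0 < C) (hJη : ∀ z : EuclideanSpace ℝ (Fin d), J z ≤ C * η ‖z‖)
    (c : ℝ) (hc : 0 < c)
    (ρn : ℕ → EuclideanSpace ℝ (Fin d) → ℝ) (hρnm : ∀ n, Measurable (ρn n))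
    (hρlb : ∀ n, ∀ x ∈ Ω, c ≤ ρn n x)
    (fn : ℕ → EuclideanSpace ℝ (Fin d) → ℝ) (hfnm : ∀ n, Measurable (fn n))
    (ε : ℕ → ℝ) (hε : ∀ n, 0 < ε n) (hε0 : Tendsto ε atTop (𝓝 0))
    (F : ℕ → ℝ≥0∞)
    (hF : ∀ n, F n = (ENNReal.ofReal (ε n ^ p))⁻¹ *
      ∫⁻ x in Ω, ∫⁻ z in Ω, ENNReal.ofReal
        ((ε n) ^ (-(d : ℝ)) * η (‖x - z‖ / ε n) * |fn n x - fn n z| ^ p *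
          ρn n x * ρn n z))
    (B : ℝ≥0) (hFbd : ∀ n, F n ≤ B) :
    (∀ n, (∀ x ∈ Ω', closedBall x (ε n) ⊆ Ω) →
      (∫⁻ x in Ω', ENNReal.ofReal
          (|fn n x - ∫ z in ball (0 : EuclideanSpace ℝ (Fin d)) (ε n),
              (ε n) ^ (-(d : ℝ)) * J ((ε n)⁻¹ • z) * fn n (x - z)| ^ p)) ≤
        ENNReal.ofReal (C * ε n ^ p / c ^ 2) * F n) ∧
    Tendsto (fun n => ∫⁻ x in Ω', ENNReal.ofReal
        (|fn n x - ∫ z in ball (0 : EuclideanSpace ℝ (Fin d)) (ε n),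
            (ε n) ^ (-(d : ℝ)) * J ((ε n)⁻¹ • z) * fn n (x - z)| ^ p))
      atTop (𝓝 0) :=
  stmt7_general d p hp Ω Ω' r hr hΩ'r η hηm hη0 J hJm hJ0 hJsupp hJ1 C hC hJη c hc ρn hρnm hρlb fn
    hfnm ε hε hε0 F hF B hFbd
end

section
/- Let m, d ∈ ℕ with 2m > d and C_1 > 0, λ > 0, M ∈ ℕ. If α_i = 0 for i ≤ M and α_i ≥ C_1 i^{2m/d} for M < i ≤ T, then ∑_{i=1}^T 1/(λ α_i + 1) ≤ M + (C_1 λ)^{−d/(2m)} ∫_0^∞ 1/(s^{2m/d} + 1) ds, and the integral ∫_0^∞ (s^{2m/d}+1)^{−1} ds is finite. -/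
open MeasureTheory Set Finset

theorem aux_int {p c : ℝ} (hp : 1 < p) (hc : 0 < c) :
    IntegrableOn (fun s : ℝ => 1 / (c * s ^ p + 1)) (Set.Ioi 0) := by
  have hp0 : (0:ℝ) ≤ p := by linarith
  have hpos : ∀ s : ℝ, 0 ≤ s → 0 < c * s ^ p + 1 := fun s hs => by
    have := Real.rpow_nonneg hs p
    nlinarith
  have hcont : ContinuousOn (fun s : ℝ => 1 / (c * s ^ p + 1)) (Set.Icc 0 1) := by
    apply ContinuousOn.div continuousOn_const
    · exact (continuousOn_const.mul (fun x hx =>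
        (Real.continuousAt_rpow_const x p (Or.inr hp0)).continuousWithinAt)).add continuousOn_const
    · exact fun x hx => (hpos x hx.1).ne'
  have h1 : IntegrableOn (fun s : ℝ => 1 / (c * s ^ p + 1)) (Set.Ioc 0 1) :=
    (hcont.integrableOn_Icc).mono_set Set.Ioc_subset_Icc_self
  have h2 : IntegrableOn (fun s : ℝ => 1 / (c * s ^ p + 1)) (Set.Ioi 1) := by
    have hig : IntegrableOn (fun s : ℝ => c⁻¹ * s ^ (-p)) (Set.Ioi 1) :=
      (integrableOn_Ioi_rpow_of_lt (by linarith) one_pos).const_mul c⁻¹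
    refine hig.mono' ?_ ?_
    · refine (ContinuousOn.aestronglyMeasurable ?_ measurableSet_Ioi)
      apply ContinuousOn.div continuousOn_const
      · exact (continuousOn_const.mul (fun x hx =>
          (Real.continuousAt_rpow_const x p (Or.inr hp0)).continuousWithinAt)).add continuousOn_const
      · exact fun x hx => (hpos x (by exact le_of_lt (lt_trans one_pos hx))).ne'
    · filter_upwards [ae_restrict_mem measurableSet_Ioi] with x hx
      have hx0 : (0:ℝ) < x := lt_trans one_pos hx
      have hxp : 0 < x ^ p := Real.rpow_pos_of_pos hx0 p
      rw [Real.norm_eq_abs, abs_of_nonneg (by positivity)]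
      rw [Real.rpow_neg hx0.le]
      rw [div_le_iff₀ (hpos x hx0.le)]
      have : c⁻¹ * (x^p)⁻¹ * (c * x^p) = 1 := by field_simp
      nlinarith [mul_pos (mul_pos (inv_pos.mpr hc) (inv_pos.mpr hxp)) hxp]
  have := h1.union h2
  rwa [Set.Ioc_union_Ioi_eq_Ioi zero_le_one] at this

/-- trace bound `tr((Id+λTΓ)^{-1}) = ∑_{i=1}^T (λα_i+1)^{-1}
  ≤ M + (C₁λ)^{-d/(2m)} ∫_0^∞ (s^{2m/d}+1)^{-1} ds` for eigenvalues `α_i` of `TΓ` with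
`α_i = 0` for `i ≤ M` and `α_i ≥ C₁ i^{2m/d}` for `M < i ≤ T`, where `2m > d`; moreover the
integral `∫_0^∞ (s^{2m/d}+1)^{-1} ds` is finite. -/
theorem stmt14 (m d M T : ℕ) (hd : 0 < d) (hmd : d < 2 * m)
    (C₁ lam : ℝ) (hC₁ : 0 < C₁) (hlam : 0 < lam)
    (α : ℕ → ℝ) (hα0 : ∀ i, 1 ≤ i → i ≤ M → α i = 0)
    (hαlb : ∀ i, M < i → i ≤ T → C₁ * (i : ℝ) ^ ((2 * m : ℝ) / d) ≤ α i) :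
    (∑ i ∈ Finset.Icc 1 T, 1 / (lam * α i + 1) ≤
      (M : ℝ) + (C₁ * lam) ^ (-(d : ℝ) / (2 * m)) *
        ∫ s in Set.Ioi (0 : ℝ), 1 / (s ^ ((2 * m : ℝ) / d) + 1)) ∧
    IntegrableOn (fun s : ℝ => 1 / (s ^ ((2 * m : ℝ) / d) + 1)) (Set.Ioi 0) := by
  set p : ℝ := (2 * m : ℝ) / d with hpdef
  have hd0 : (0:ℝ) < d := by exact_mod_cast hd
  have hp : 1 < p := (one_lt_div hd0).mpr (by exact_mod_cast hmd)
  have hp0 : (0:ℝ) < p := lt_trans one_pos hp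
  have hintg : IntegrableOn (fun s : ℝ => 1 / (s ^ p + 1)) (Set.Ioi 0) := by
    have := aux_int hp (one_pos : (0:ℝ) < 1)
    simpa using this
  refine ⟨?_, hintg⟩
  set c : ℝ := C₁ * lam with hcdef
  have hc : 0 < c := mul_pos hC₁ hlam
  set h : ℝ → ℝ := fun s => 1 / (c * s ^ p + 1) with hhdef
  have hposd : ∀ s : ℝ, 0 ≤ s → 0 < c * s ^ p + 1 := fun s hs => by
    have := Real.rpow_nonneg hs p
    nlinarith
  have hinth : IntegrableOn h (Set.Ioi 0) := aux_int hp hc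
  have hnonneg : ∀ s : ℝ, 0 ≤ s → 0 ≤ h s := fun s hs => le_of_lt (by
    simp only [hhdef]; exact div_pos one_pos (hposd s hs))
  -- change of variables
  have hkey : ∫ s in Set.Ioi (0:ℝ), h s =
      c ^ (-(1/p)) * ∫ s in Set.Ioi (0:ℝ), 1 / (s ^ p + 1) := by
    have hb : 0 < c ^ (1/p) := Real.rpow_pos_of_pos hc _
    have := integral_comp_mul_left_Ioi (fun t : ℝ => 1 / (t ^ p + 1)) 0 hb
    rw [mul_zero] at this
    have heq : ∫ s in Set.Ioi (0:ℝ), h s =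
        ∫ s in Set.Ioi (0:ℝ), (fun t : ℝ => 1 / (t ^ p + 1)) (c ^ (1/p) * s) := by
      refine setIntegral_congr_fun measurableSet_Ioi (fun x hx => ?_)
      simp only [hhdef]
      rw [Real.mul_rpow hb.le (le_of_lt hx), ← Real.rpow_mul hc.le,
        one_div_mul_cancel hp0.ne', Real.rpow_one]
    rw [heq, this, smul_eq_mul, ← Real.rpow_neg_one, ← Real.rpow_mul hc.le]
    norm_num
  -- split the sum
  set f : ℕ → ℝ := fun i => 1 / (lam * α i + 1) with hfdef
  have hsplit : ∑ i ∈ Finset.Icc 1 T, f i =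
      (∑ i ∈ (Finset.Icc 1 T).filter (fun i => i ≤ M), f i) +
      ∑ i ∈ (Finset.Icc 1 T).filter (fun i => ¬ i ≤ M), f i :=
    (Finset.sum_filter_add_sum_filter_not _ _ _).symm
  have hsum1 : (∑ i ∈ (Finset.Icc 1 T).filter (fun i => i ≤ M), f i) ≤ (M : ℝ) := by
    have : ∀ i ∈ (Finset.Icc 1 T).filter (fun i => i ≤ M), f i = 1 := by
      intro i hi
      simp only [Finset.mem_filter, Finset.mem_Icc] at hi
      simp [hfdef, hα0 i hi.1.1 hi.2]
    rw [Finset.sum_congr rfl this, Finset.sum_const, nsmul_eq_mul, mul_one]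
    have hcard : ((Finset.Icc 1 T).filter (fun i => i ≤ M)).card ≤ (Finset.Icc 1 M).card := by
      apply Finset.card_le_card
      intro i hi
      simp only [Finset.mem_filter, Finset.mem_Icc] at hi ⊢
      exact ⟨hi.1.1, hi.2⟩
    rw [Nat.card_Icc] at hcard
    exact_mod_cast le_trans hcard (by omega)
  have hsum2 : (∑ i ∈ (Finset.Icc 1 T).filter (fun i => ¬ i ≤ M), f i) ≤
      ∑ i ∈ Finset.Icc 1 T, h i := by
    calc (∑ i ∈ (Finset.Icc 1 T).filter (fun i => ¬ i ≤ M), f i)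
        ≤ ∑ i ∈ (Finset.Icc 1 T).filter (fun i => ¬ i ≤ M), h i := by
          apply Finset.sum_le_sum
          intro i hi
          simp only [Finset.mem_filter, Finset.mem_Icc, not_le] at hi
          have hlb := hαlb i hi.2 hi.1.2
          have hi0 : (0:ℝ) ≤ (i:ℝ) := Nat.cast_nonneg i
          have hip : 0 ≤ (i:ℝ) ^ p := Real.rpow_nonneg hi0 p
          simp only [hfdef, hhdef]
          apply one_div_le_one_div_of_le (hposd _ hi0)
          have : c * (i:ℝ)^p = lam * (C₁ * (i:ℝ)^p) := by ring
          rw [this]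
          have := mul_le_mul_of_nonneg_left hlb hlam.le
          linarith
      _ ≤ ∑ i ∈ Finset.Icc 1 T, h i := by
          apply Finset.sum_le_sum_of_subset_of_nonneg (Finset.filter_subset _ _)
          intro i hi _
          exact hnonneg _ (Nat.cast_nonneg i)
  -- sum vs integral
  have hanti : AntitoneOn h (Set.Icc (0:ℝ) (0 + T)) := by
    intro x hx y hy hxy
    simp only [hhdef]
    apply one_div_le_one_div_of_le (hposd _ hx.1)
    have := Real.rpow_le_rpow hx.1 hxy hp0.le
    nlinarith
  have hsi := hanti.sum_le_integral
  have hreindex : ∑ i ∈ Finset.Icc 1 T, h i =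
      ∑ i ∈ Finset.range T, h ((0:ℝ) + ((i + 1 : ℕ) : ℝ)) := by
    rw [← Finset.Ico_add_one_right_eq_Icc, Finset.sum_Ico_eq_sum_range]
    refine Finset.sum_congr (by simp) (fun i _ => ?_)
    push_cast
    ring_nf
  have hsum3 : ∑ i ∈ Finset.Icc 1 T, h i ≤ ∫ s in Set.Ioi (0:ℝ), h s := by
    rw [hreindex]
    refine le_trans hsi ?_
    rw [intervalIntegral.integral_of_le (by positivity)]
    rw [zero_add]
    refine setIntegral_mono_set hinth ?_ ?_
    · filter_upwards [ae_restrict_mem measurableSet_Ioi] with x hx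
      exact hnonneg x (le_of_lt hx)
    · exact HasSubset.Subset.eventuallyLE Set.Ioc_subset_Ioi_self
  -- finish
  have hfinal : ∑ i ∈ Finset.Icc 1 T, f i ≤ (M:ℝ) + ∫ s in Set.Ioi (0:ℝ), h s := by
    rw [hsplit]
    exact add_le_add hsum1 (le_trans hsum2 hsum3)
  rw [hkey] at hfinal
  have hexp : -(1/p) = -(d : ℝ) / (2 * m) := by
    rw [hpdef, one_div_div, neg_div]
  rwa [hexp] at hfinal
end
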